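/- If Γ is a triangle-free graph on 41 vertices with no independent set of size 10, and every vertex of Γ has degree 8 or 9, then there is a vertex v of degree 8 whose dual neighbourhood is a triangle-free graph on 32 vertices with no independent set of size 9 and at most 112 edges. -/

import Mathlib

/-!
Let `A` be the set of vertices of degree 8. Counting degrees, `2 e(Γ) + |A| = 9 · 41`, so `|A|` is
odd. Adjacent vertices of `A` have disjoint neighbourhoods in `A` (no triangles), so some `v ∈ A`
has `k` neighbours in `A` with `2k < |A|`. The neighbourhood of `v` is independent, so every
edge of `Γ` outside the dual neighbourhood of `v` is counted exactly once by
`∑_{u ~ v} deg u = 72 - k`, whence `2 e(dual) = 369 - |A| - 2 (72 - k) ≤ 224`. An independent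
set of the dual neighbourhood stays independent after adding `v`.
-/

open Finset

namespace SimpleGraph

variable {V : Type*} (G : SimpleGraph V)

abbrev dualNeighborSet (v : V) : Set V := {w | w ≠ v ∧ ¬ G.Adj v w}

variable {G}

lemma CliqueFree.exists_two_mul_card_neighborFinset_inter_le [Fintype V] [DecidableEq V]
    [DecidableRel G.Adj] (hG : G.CliqueFree 3) {s : Finset V} (hs : s.Nonempty) :
    ∃ v ∈ s, 2 * #(G.neighborFinset v ∩ s) ≤ #s := by
  by_cases hedge : ∃ u ∈ s, ∃ w ∈ s, G.Adj u w
  · obtain ⟨u, hu, w, hw, huw⟩ := hedge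
    have hdisj : Disjoint (G.neighborFinset u ∩ s) (G.neighborFinset w ∩ s) := by
      rw [Finset.disjoint_left]
      intro x hxu hxw
      simp only [mem_inter, mem_neighborFinset] at hxu hxw
      exact hG {u, w, x} (is3Clique_triple_iff.2 ⟨huw, hxu.1, hxw.1⟩)
    have hunion : #(G.neighborFinset u ∩ s) + #(G.neighborFinset w ∩ s) ≤ #s := by
      rw [← card_union_of_disjoint hdisj]
      exact card_le_card (union_subset inter_subset_right inter_subset_right)
    by_cases h : 2 * #(G.neighborFinset u ∩ s) ≤ #s
    · exact ⟨u, hu, h⟩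
    · exact ⟨w, hw, by omega⟩
  · push Not at hedge
    obtain ⟨v, hv⟩ := hs
    refine ⟨v, hv, ?_⟩
    have hempty : G.neighborFinset v ∩ s = ∅ := by
      ext w
      simpa using fun hvw hw ↦ hedge v hv w hw hvw
    simp [hempty]

lemma IsIndepSet.card_biUnion_incidenceFinset [Fintype V] [DecidableEq V] [DecidableRel G.Adj]
    {s : Finset V} (hs : G.IsIndepSet s) :
    #(s.biUnion fun u ↦ G.incidenceFinset u) = ∑ u ∈ s, G.degree u := by
  rw [card_biUnion]
  · simp_rw [card_incidenceFinset_eq_degree]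
  · intro u hu w hw huw
    rw [Function.onFun, ← disjoint_coe, coe_incidenceFinset, coe_incidenceFinset,
      Set.disjoint_iff_inter_eq_empty,
      G.incidenceSet_inter_incidenceSet_of_not_adj (hs hu hw huw) huw]

lemma biUnion_incidenceFinset_neighborFinset [Fintype V] [DecidableEq V] [DecidableRel G.Adj]
    (v : V) : ((G.neighborFinset v).biUnion fun u ↦ G.incidenceFinset u) =
      G.edgeFinset \ (G.dualNeighborSet v).toFinset.sym2 := by
  ext e
  induction e using Sym2.ind with | h x y => ?_
  simp only [mem_biUnion, mem_neighborFinset, mem_incidenceFinset, incidenceSet,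
    Set.mem_ofPred_eq, mem_edgeSet, Sym2.mem_iff, Set.toFinset_ofPred, ne_eq, mem_sdiff,
    mem_edgeFinset, mem_sym2_iff, mem_filter, mem_univ, true_and, forall_eq_or_imp, forall_eq,
    not_and, Decidable.not_not, and_imp]
  constructor
  · rintro ⟨u, hvu, hxy, rfl | rfl⟩
    · exact ⟨hxy, fun _ h ↦ absurd hvu h⟩
    · exact ⟨hxy, fun _ _ _ ↦ hvu⟩
  · rintro ⟨hxy, hout⟩
    by_cases hx : x = v
    · subst hx
      exact ⟨y, hxy, hxy, Or.inr rfl⟩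
    by_cases hvx : G.Adj v x
    · exact ⟨x, hvx, hxy, Or.inl rfl⟩
    by_cases hy : y = v
    · subst hy
      exact ⟨x, hxy.symm, hxy, Or.inl rfl⟩
    exact ⟨y, hout hx hvx hy, hxy, Or.inr rfl⟩

lemma CliqueFree.card_edgeFinset_induce_dualNeighborSet_add_sum_degree [Fintype V]
    [DecidableEq V] [DecidableRel G.Adj] (hG : G.CliqueFree 3) (v : V) :
    #(G.induce (G.dualNeighborSet v)).edgeFinset + ∑ u ∈ G.neighborFinset v, G.degree u =
      #G.edgeFinset := by
  have hindep : G.IsIndepSet (G.neighborFinset v : Set V) := by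
    simpa using G.isIndepSet_neighborSet_of_triangleFree hG v
  rw [← card_map, map_edgeFinset_induce, ← hindep.card_biUnion_incidenceFinset,
    biUnion_incidenceFinset_neighborFinset, card_inter_add_card_sdiff]

lemma card_dualNeighborSet [Fintype V] [DecidableEq V] [DecidableRel G.Adj] (v : V) :
    Fintype.card {w // w ≠ v ∧ ¬ G.Adj v w} = Fintype.card V - G.degree v - 1 := by
  have hcompl :
      ({w | w ≠ v ∧ ¬ G.Adj v w} : Finset V) = (insert v (G.neighborFinset v))ᶜ := by
    ext w
    simp [eq_comm]
  rw [Fintype.card_subtype, hcompl, card_compl, card_insert_of_notMem (by simp),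
    card_neighborFinset_eq_degree]
  omega

lemma cliqueFree_compl_induce_dualNeighborSet {n : ℕ} (hG : Gᶜ.CliqueFree (n + 1)) (v : V) :
    (G.induce (G.dualNeighborSet v))ᶜ.CliqueFree n := by
  classical
  intro t ht
  have hmap := (ht.map (f := Function.Embedding.subtype _)).mono (H := Gᶜ) ?_
  · refine hG _ (hmap.insert (a := v) ?_)
    simp only [mem_map, Function.Embedding.coe_subtype, compl_adj]
    rintro _ ⟨w, -, rfl⟩
    exact ⟨w.2.1.symm, w.2.2⟩
  · rw [map_le_iff_le_comap]
    intro a b hab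
    simpa [compl_adj, Subtype.ext_iff] using hab

lemma sum_degree_add_card_filter_degree_eq [Fintype V] [DecidableRel G.Adj] {d : ℕ}
    (s : Finset V) (hs : ∀ v ∈ s, G.degree v = d ∨ G.degree v = d + 1) :
    ∑ v ∈ s, G.degree v + #{v ∈ s | G.degree v = d} = (d + 1) * #s := by
  rw [card_filter, ← sum_add_distrib, sum_const_nat fun v hv ↦ ?_, mul_comm]
  rcases hs v hv with h | h <;> simp [h]

end SimpleGraph

open SimpleGraph in
/-- If `Γ` is a triangle-free graph on 41 vertices with no independent 10-set in which
every vertex has degree 8 or 9, then some vertex `v` of degree 8 has dual neighbourhood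
which is a triangle-free graph on 32 vertices with no independent 9-set and at most 112
edges. -/
theorem exists_good_dual_neighborhood
    {V : Type*} [Fintype V] [DecidableEq V] (Γ : SimpleGraph V) [DecidableRel Γ.Adj]
    (hcard : Fintype.card V = 41)
    (hG3 : Γ.CliqueFree 3) (hG10 : Γᶜ.CliqueFree 10)
    (hdeg : ∀ v : V, Γ.degree v = 8 ∨ Γ.degree v = 9) :
    ∃ v : V, Γ.degree v = 8 ∧
      Fintype.card {w : V // w ≠ v ∧ ¬ Γ.Adj v w} = 32 ∧
      (Γ.induce {w | w ≠ v ∧ ¬ Γ.Adj v w}).CliqueFree 3 ∧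
      ((Γ.induce {w | w ≠ v ∧ ¬ Γ.Adj v w})ᶜ).CliqueFree 9 ∧
      (Γ.induce {w | w ≠ v ∧ ¬ Γ.Adj v w}).edgeFinset.card ≤ 112 := by
  set A : Finset V := {v | Γ.degree v = 8}
  have hA : 2 * #Γ.edgeFinset + #A = 369 := by
    have := sum_degree_add_card_filter_degree_eq univ fun v _ ↦ hdeg v
    rwa [sum_degrees_eq_twice_card_edges, card_univ, hcard] at this
  obtain ⟨v, hvA, hv⟩ := hG3.exists_two_mul_card_neighborFinset_inter_le (s := A)
    (card_pos.1 (by omega))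
  have hv8 : Γ.degree v = 8 := (mem_filter.1 hvA).2
  have hN := sum_degree_add_card_filter_degree_eq (Γ.neighborFinset v) fun u _ ↦ hdeg u
  have hNA : {u ∈ Γ.neighborFinset v | Γ.degree u = 8} = Γ.neighborFinset v ∩ A := by
    ext; simp [A]
  rw [card_neighborFinset_eq_degree, hv8, hNA] at hN
  have hE := hG3.card_edgeFinset_induce_dualNeighborSet_add_sum_degree v
  refine ⟨v, hv8, ?_, ?_, cliqueFree_compl_induce_dualNeighborSet hG10 v, ?_⟩
  · rw [card_dualNeighborSet, hcard, hv8]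
  · exact hG3.comap (Embedding.induce _).isContained
  · change #(Γ.induce (Γ.dualNeighborSet v)).edgeFinset ≤ 112
    omega
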